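/- Let γ = ((i₁ j₁),…,(i_k j_k)) ∈ Σ*_n(k) and let l ∈ {1,…,k}. Then γ_l is obtained from γ_{l−1} by inserting j_l into the cycle of i_l immediately after i_l; precisely: γ_l(i_l) = j_l, γ_l(j_l) = γ_{l−1}(i_l), and γ_l(x) = γ_{l−1}(x) for every x ∉ {i_l, j_l}. -/

import Mathlib

/-- ℓ(σ): the number of cycles (orbits) of σ, including fixed points, counted via the
minimal representative of each orbit. -/
noncomputable def cycleCount {n : ℕ} (σ : Equiv.Perm (Fin n)) : ℕ :=
  Set.ncard {x : Fin n | ∀ y, σ.SameCycle x y → x ≤ y}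

/-- |σ| := n − ℓ(σ). -/
noncomputable def normPerm {n : ℕ} (σ : Equiv.Perm (Fin n)) : ℕ := n - cycleCount σ

/-- σ₁ ≼ σ₂ iff |σ₂| = |σ₁| + |σ₁⁻¹σ₂|. -/
def precLe {n : ℕ} (σ₁ σ₂ : Equiv.Perm (Fin n)) : Prop :=
  normPerm σ₂ = normPerm σ₁ + normPerm (σ₁⁻¹ * σ₂)

/-- Σ_n(k): tuples of k transpositions with |τ₁⋯τ_k| = k and τ₁⋯τ_k ≼ (1 … n). -/
def SigmaSet (n k : ℕ) : Set (Fin k → Equiv.Perm (Fin n)) :=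
  {τ | (∀ l, (τ l).IsSwap) ∧ normPerm (List.ofFn τ).prod = k ∧
      precLe (List.ofFn τ).prod (finRotate n)}

/-- γ_m := τ₁∘⋯∘τ_m, the product of the first m entries of the chain. -/
def gammaP {n k : ℕ} (τ : Fin k → Equiv.Perm (Fin n)) (m : ℕ) : Equiv.Perm (Fin n) :=
  ((List.ofFn τ).take m).prod

/-!
Since `γ_l = γ_{l-1} * (i_l j_l)`, only `γ_l(i_l) = j_l`, i.e. `γ_{l-1}(j_l) = j_l`, needs an
argument. Along a path of `Σ_n(k)` every `|γ_m| = m`, so each transposition merges two cycles, and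
every `γ_m ≼ c`. Permutations below `c` have cyclically increasing cycles: `c` does, every
`σ ≼ c` is obtained from `c` by splitting cycles, and splitting preserves the property. If
`γ_{l-1}` moved `j_l`, then `j_l` would share a cycle with some earlier `i_m ≤ i_l`. Since
`γ_l(i_l) = γ_{l-1}(j_l)` lies strictly between `i_l` and `j_l` (the cycles of `γ_l` increase),
`i_m` lies strictly between `j_l` and `γ_{l-1}(j_l)`, against the cycles of `γ_{l-1}` increasing.
-/

open Equiv Equiv.Perm

namespace Equiv.Perm

section SameCycle

variable {α : Type*} {σ : Perm α} {a b x y : α}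

lemma SameCycle.mem_of_mapsTo [Finite α] {s : Set α} (hs : Set.MapsTo σ s s)
    (h : σ.SameCycle x y) (hx : x ∈ s) : y ∈ s := by
  obtain ⟨i, rfl⟩ := h.exists_nat_pow_eq
  rw [coe_pow]
  exact hs.iterate i hx

variable [DecidableEq α]

lemma mul_swap_apply_left (σ : Perm α) (a b : α) : (σ * swap a b) a = σ b := by
  simp

lemma mul_swap_apply_right (σ : Perm α) (a b : α) : (σ * swap a b) b = σ a := by
  simp

lemma mul_swap_apply_of_ne_of_ne (σ : Perm α) (hxa : x ≠ a) (hxb : x ≠ b) :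
    (σ * swap a b) x = σ x := by
  simp [swap_apply_of_ne_of_ne hxa hxb]

variable [Finite α]

lemma SameCycle.of_mul_swap (h : (σ * swap a b).SameCycle x y) :
    σ.SameCycle x y ∨
      ((σ.SameCycle a x ∨ σ.SameCycle b x) ∧ (σ.SameCycle a y ∨ σ.SameCycle b y)) := by
  refine h.mem_of_mapsTo (s := {w | σ.SameCycle x w ∨
    ((σ.SameCycle a x ∨ σ.SameCycle b x) ∧ (σ.SameCycle a w ∨ σ.SameCycle b w))})
    (fun w hw => ?_) (Or.inl .rfl)
  simp only [Set.mem_ofPred_eq] at hw ⊢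
  rcases eq_or_ne w a with rfl | hwa
  · rw [mul_swap_apply_left]
    exact Or.inr ⟨hw.elim (fun h => Or.inl h.symm) And.left, Or.inr SameCycle.rfl.apply_right⟩
  rcases eq_or_ne w b with rfl | hwb
  · rw [mul_swap_apply_right]
    exact Or.inr ⟨hw.elim (fun h => Or.inr h.symm) And.left, Or.inl SameCycle.rfl.apply_right⟩
  rw [mul_swap_apply_of_ne_of_ne σ hwa hwb]
  exact hw.imp SameCycle.apply_right
    (And.imp_right (Or.imp SameCycle.apply_right SameCycle.apply_right))

lemma sameCycle_mul_swap_of_not_sameCycle (h : ¬σ.SameCycle a b) :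
    (σ * swap a b).SameCycle a b := by
  -- the `σ`-orbit of `b`, entered at `σ b = (σ * swap a b) a`, avoids `a`, so that
  -- `σ * swap a b` follows it all the way back to `b`
  set S := {w | σ.SameCycle b w → (σ * swap a b).SameCycle a w}
  have hS : Set.MapsTo σ S S := by
    intro w hw hbw
    rcases eq_or_ne w a with rfl | hwa
    · exact absurd (sameCycle_apply_right.mp hbw).symm h
    rcases eq_or_ne w b with rfl | hwb
    · rw [← mul_swap_apply_left σ a w]
      exact SameCycle.rfl.apply_right
    rw [← mul_swap_apply_of_ne_of_ne σ hwa hwb]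
    exact (hw (sameCycle_apply_right.mp hbw)).apply_right
  have hσb : σ b ∈ S := fun _ => by
    rw [← mul_swap_apply_left σ a b]
    exact SameCycle.rfl.apply_right
  exact SameCycle.mem_of_mapsTo hS (sameCycle_apply_left.mpr .rfl) hσb .rfl

lemma SameCycle.mul_swap_of_not_sameCycle (hxy : σ.SameCycle x y) (h : ¬σ.SameCycle a b) :
    (σ * swap a b).SameCycle x y := by
  have hab := sameCycle_mul_swap_of_not_sameCycle h
  have hxy' : ((σ * swap a b) * swap a b).SameCycle x y := by rwa [mul_swap_mul_self]
  rcases hxy'.of_mul_swap with hxy | ⟨hx, hy⟩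
  · exact hxy
  · exact (hx.elim id hab.trans).symm.trans (hy.elim id hab.trans)

lemma SameCycle.of_mul_swap_of_sameCycle (hxy : (σ * swap a b).SameCycle x y)
    (h : σ.SameCycle a b) : σ.SameCycle x y := by
  rcases hxy.of_mul_swap with hxy | ⟨hx, hy⟩
  · exact hxy
  · exact (hx.elim id h.trans).symm.trans (hy.elim id h.trans)

lemma not_sameCycle_mul_swap_of_sameCycle (h : σ.SameCycle a b) (hab : a ≠ b) :
    ¬(σ * swap a b).SameCycle a b := by
  have hex : ∃ t, (σ ^ (t + 1)) a = b := by
    obtain ⟨_ | t, ht⟩ := h.exists_nat_pow_eq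
    · exact absurd ht hab
    · exact ⟨t, ht⟩
  set q := Nat.find hex
  have hq : (σ ^ (q + 1)) a = b := Nat.find_spec hex
  have hne_b {t} (ht : t < q) : (σ ^ (t + 1)) a ≠ b := Nat.find_min hex ht
  -- the `σ * swap a b`-orbit of `b` is the arc `σ a, σ² a, …, σ^(q+1) a = b`, which avoids `a`
  set W := {w | ∃ t ≤ q, (σ ^ (t + 1)) a = w}
  have haW : a ∉ W := by
    rintro ⟨t, ht, hta⟩
    rcases ht.lt_or_eq with ht | rfl
    · apply hne_b (show q - t - 1 < q by omega)
      rw [← hq, show q + 1 = q - t - 1 + 1 + (t + 1) by omega, pow_add σ (q - t - 1 + 1),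
        mul_apply, hta]
    · exact hab (hta.symm.trans hq)
  have hW : Set.MapsTo (σ * swap a b) W W := by
    rintro _ ⟨t, ht, rfl⟩
    rcases ht.lt_or_eq with ht | rfl
    · refine ⟨t + 1, ht, ?_⟩
      rw [mul_swap_apply_of_ne_of_ne σ (fun h => haW ⟨t, ht.le, h⟩) (hne_b ht), pow_succ' σ (t + 1),
        mul_apply]
    · exact ⟨0, Nat.zero_le _, by rw [hq, mul_swap_apply_right, zero_add, pow_one]⟩
  exact fun hab' => haW (hab'.symm.mem_of_mapsTo hW ⟨q, le_rfl, hq⟩)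

end SameCycle

section CycleMin

variable {α : Type*} [LinearOrder α] {σ : Perm α} {a b x y : α}

def cycleMins (σ : Perm α) : Set α := {x | ∀ y, σ.SameCycle x y → x ≤ y}

lemma cycleMins_eq_univ_iff : σ.cycleMins = .univ ↔ σ = 1 := by
  refine ⟨fun h => Perm.ext fun x => le_antisymm ?_ ?_, fun h => ?_⟩
  · exact (h ▸ Set.mem_univ (σ x) : σ x ∈ σ.cycleMins) x (sameCycle_apply_left.mpr .rfl)
  · exact (h ▸ Set.mem_univ x : x ∈ σ.cycleMins) _ SameCycle.rfl.apply_right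
  · subst h
    exact Set.eq_univ_of_forall fun x y hxy => (sameCycle_one.mp hxy).le

variable [Fintype α]

def cycleMin (σ : Perm α) (x : α) : α :=
  ({y | σ.SameCycle x y} : Finset α).min' ⟨x, by simpa using SameCycle.rfl⟩

lemma sameCycle_cycleMin (σ : Perm α) (x : α) : σ.SameCycle x (σ.cycleMin x) :=
  (Finset.mem_filter.mp (Finset.min'_mem _ _)).2

lemma cycleMin_le (h : σ.SameCycle x y) : σ.cycleMin x ≤ y :=
  Finset.min'_le _ _ (by simpa using h)

lemma cycleMin_mem_cycleMins (σ : Perm α) (x : α) : σ.cycleMin x ∈ σ.cycleMins :=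
  fun _ hy => cycleMin_le ((σ.sameCycle_cycleMin x).trans hy)

lemma eq_cycleMin_of_mem_cycleMins (hx : x ∈ σ.cycleMins) (h : σ.SameCycle y x) :
    x = σ.cycleMin y :=
  le_antisymm (hx _ (h.symm.trans (σ.sameCycle_cycleMin y))) (cycleMin_le h)

lemma cycleMins_mul_swap_of_not_sameCycle (h : ¬σ.SameCycle a b) :
    (σ * swap a b).cycleMins = σ.cycleMins \ {max (σ.cycleMin a) (σ.cycleMin b)} := by
  have hne : σ.cycleMin a ≠ σ.cycleMin b := fun he =>
    h (((σ.sameCycle_cycleMin a).trans (he ▸ (σ.sameCycle_cycleMin b).symm)))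
  ext x
  simp only [Set.mem_sdiff, Set.mem_singleton_iff]
  constructor
  · intro hx
    refine ⟨fun y hy => hx y (hy.mul_swap_of_not_sameCycle h), fun hxmax => hne ?_⟩
    have hmm : (σ * swap a b).SameCycle (σ.cycleMin a) (σ.cycleMin b) :=
      ((σ.sameCycle_cycleMin a).mul_swap_of_not_sameCycle h).symm.trans
        ((sameCycle_mul_swap_of_not_sameCycle h).trans
          ((σ.sameCycle_cycleMin b).mul_swap_of_not_sameCycle h))
    have hxa : (σ * swap a b).SameCycle x (σ.cycleMin a) := by
      rcases max_choice (σ.cycleMin a) (σ.cycleMin b) with hm | hm <;> rw [hxmax, hm]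
      exact hmm.symm
    have ha := hx _ hxa
    have hb := hx _ (hxa.trans hmm)
    rw [hxmax] at ha hb
    exact le_antisymm ((le_max_left _ _).trans hb) ((le_max_right _ _).trans ha)
  · rintro ⟨hx, hxmax⟩ y hy
    rcases hy.of_mul_swap with hy | ⟨hax, hay⟩
    · exact hx y hy
    · have hxmin : x = min (σ.cycleMin a) (σ.cycleMin b) := by
        rcases hax with hax | hax <;> rw [eq_cycleMin_of_mem_cycleMins hx hax] at hxmax ⊢ <;>
          grind
      rcases hay with hay | hay
      · exact hxmin ▸ (min_le_left _ _).trans (cycleMin_le hay)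
      · exact hxmin ▸ (min_le_right _ _).trans (cycleMin_le hay)

end CycleMin

end Equiv.Perm

section Norm

variable {n : ℕ} {σ τ : Perm (Fin n)} {a b : Fin n}

lemma cycleCount_eq_ncard_cycleMins (σ : Perm (Fin n)) : cycleCount σ = σ.cycleMins.ncard :=
  rfl

lemma cycleCount_le (σ : Perm (Fin n)) : cycleCount σ ≤ n := by
  simpa [cycleCount_eq_ncard_cycleMins] using Set.ncard_le_card σ.cycleMins

lemma normPerm_eq_zero_iff : normPerm σ = 0 ↔ σ = 1 := by
  rw [← cycleMins_eq_univ_iff, Set.eq_univ_iff_ncard, normPerm, ← cycleCount_eq_ncard_cycleMins]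
  have := cycleCount_le σ
  simp only [Nat.card_eq_fintype_card, Fintype.card_fin]
  omega

lemma cycleCount_mul_swap_of_not_sameCycle (h : ¬σ.SameCycle a b) :
    cycleCount (σ * swap a b) + 1 = cycleCount σ := by
  rw [cycleCount_eq_ncard_cycleMins, cycleCount_eq_ncard_cycleMins,
    cycleMins_mul_swap_of_not_sameCycle h]
  refine Set.ncard_sdiff_singleton_add_one ?_ (Set.toFinite _)
  rcases max_choice (σ.cycleMin a) (σ.cycleMin b) with hm | hm <;> rw [hm] <;>
    exact σ.cycleMin_mem_cycleMins _

lemma normPerm_mul_swap_of_not_sameCycle (h : ¬σ.SameCycle a b) :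
    normPerm (σ * swap a b) = normPerm σ + 1 := by
  have := cycleCount_mul_swap_of_not_sameCycle h
  have := cycleCount_le σ
  unfold normPerm
  omega

lemma normPerm_mul_swap_of_sameCycle (h : σ.SameCycle a b) (hab : a ≠ b) :
    normPerm (σ * swap a b) + 1 = normPerm σ := by
  simpa using (normPerm_mul_swap_of_not_sameCycle (not_sameCycle_mul_swap_of_sameCycle h hab)).symm

lemma normPerm_mul_swap_le (σ : Perm (Fin n)) (a b : Fin n) :
    normPerm (σ * swap a b) ≤ normPerm σ + 1 := by
  by_cases h : σ.SameCycle a b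
  · rcases eq_or_ne a b with rfl | hab
    · rw [swap_self, ← Perm.one_def, mul_one]; omega
    · have := normPerm_mul_swap_of_sameCycle h hab
      omega
  · exact (normPerm_mul_swap_of_not_sameCycle h).le

lemma normPerm_inv (σ : Perm (Fin n)) : normPerm σ⁻¹ = normPerm σ := by
  simp [normPerm, cycleCount, sameCycle_inv]

lemma normPerm_swap_mul_of_sameCycle (h : σ.SameCycle a b) (hab : a ≠ b) :
    normPerm (swap a b * σ) + 1 = normPerm σ := by
  rw [← normPerm_inv, mul_inv_rev, swap_inv, ← normPerm_inv σ]
  exact normPerm_mul_swap_of_sameCycle (sameCycle_inv.mpr h) hab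

lemma normPerm_eq_one_of_isSwap (h : σ.IsSwap) : normPerm σ = 1 := by
  obtain ⟨a, b, hab, rfl⟩ := h
  simpa [normPerm_eq_zero_iff.mpr rfl] using
    normPerm_mul_swap_of_not_sameCycle (σ := 1) (mt sameCycle_one.mp hab)

lemma normPerm_mul_le (σ τ : Perm (Fin n)) : normPerm (σ * τ) ≤ normPerm σ + normPerm τ := by
  induction hτ : normPerm τ generalizing τ with
  | zero => simp [normPerm_eq_zero_iff.mp hτ]
  | succ d ih =>
    obtain ⟨x, hx⟩ : ∃ x, τ x ≠ x := by
      by_contra! h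
      simp [normPerm_eq_zero_iff.mpr (Perm.ext h)] at hτ
    have hsplit := normPerm_mul_swap_of_sameCycle (SameCycle.rfl.apply_right : τ.SameCycle x (τ x))
      hx.symm
    calc normPerm (σ * τ) = normPerm (σ * (τ * swap x (τ x)) * swap x (τ x)) := by
          rw [mul_assoc σ, mul_swap_mul_self]
      _ ≤ normPerm (σ * (τ * swap x (τ x))) + 1 := normPerm_mul_swap_le _ _ _
      _ ≤ normPerm σ + (d + 1) := by have := ih (τ * swap x (τ x)) (by omega); omega

end Norm

section PrecLe

variable {n : ℕ} {σ ρ : Perm (Fin n)}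

lemma precLe_trans {σ₁ σ₂ σ₃ : Perm (Fin n)} (h₁₂ : precLe σ₁ σ₂) (h₂₃ : precLe σ₂ σ₃) :
    precLe σ₁ σ₃ := by
  have h₁ := normPerm_mul_le σ₁ (σ₁⁻¹ * σ₃)
  have h₂ := normPerm_mul_le (σ₁⁻¹ * σ₂) (σ₂⁻¹ * σ₃)
  rw [mul_inv_cancel_left] at h₁
  rw [mul_assoc, mul_inv_cancel_left] at h₂
  unfold precLe at *
  omega

lemma exists_precLe_mul_swap (h : precLe σ ρ) (hne : σ ≠ ρ) :
    ∃ a b, a ≠ b ∧ precLe (σ * swap a b) ρ ∧ (σ * swap a b).SameCycle a b ∧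
      normPerm ((σ * swap a b)⁻¹ * ρ) < normPerm (σ⁻¹ * ρ) := by
  obtain ⟨x, hx⟩ : ∃ x, (σ⁻¹ * ρ) x ≠ x := by
    by_contra! hfix
    exact hne (inv_mul_eq_one.mp (Perm.ext hfix))
  unfold precLe at h
  set π := σ⁻¹ * ρ
  have hπ := normPerm_swap_mul_of_sameCycle (SameCycle.rfl.apply_right : π.SameCycle x (π x))
    hx.symm
  have hinv : (σ * swap x (π x))⁻¹ * ρ = swap x (π x) * π := by
    rw [mul_inv_rev, swap_inv, mul_assoc]
  have hup := normPerm_mul_swap_le σ x (π x)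
  have hlow := normPerm_mul_le (σ * swap x (π x)) ((σ * swap x (π x))⁻¹ * ρ)
  rw [mul_inv_cancel_left, hinv] at hlow
  refine ⟨x, π x, hx.symm, by unfold precLe; rw [hinv]; omega, ?_, by rw [hinv]; omega⟩
  by_contra hsc
  have := normPerm_mul_swap_of_not_sameCycle hsc
  rw [mul_swap_mul_self] at this
  omega

lemma precLe_induction {P : Perm (Fin n) → Prop} (top : P ρ)
    (split : ∀ τ a b, P τ → τ.SameCycle a b → a ≠ b → P (τ * swap a b)) (h : precLe σ ρ) :
    P σ := by
  induction hd : normPerm (σ⁻¹ * ρ) using Nat.strong_induction_on generalizing σ with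
  | _ d ih =>
  rcases eq_or_ne σ ρ with rfl | hne
  · exact top
  obtain ⟨a, b, hab, h', hsc, hlt⟩ := exists_precLe_mul_swap h hne
  simpa using split _ a b (ih _ (hd ▸ hlt) h' rfl) hsc hab

end PrecLe

namespace Equiv.Perm

variable {n : ℕ} {ρ : Perm (Fin n)} {a b y z : Fin n}

/-- Nothing in the cycle of `x` lies strictly between `x` and `ρ x` in the cyclic order of
`Fin n`: read along `ρ`, every cycle winds once around `Fin n` in increasing order. -/
def CyclesIncreasing (ρ : Perm (Fin n)) : Prop :=
  ∀ x y, ρ.SameCycle x y → ¬sbtw x y (ρ x)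

lemma cyclesIncreasing_finRotate (n : ℕ) : (finRotate n).CyclesIncreasing := by
  cases n with
  | zero => exact fun x => x.elim0
  | succ m =>
    intro x y _ hxy
    simp only [finRotate_apply, Fin.sbtw_iff, Fin.lt_def, Fin.val_add_one, Fin.ext_iff,
      Fin.val_last] at hxy
    split_ifs at hxy <;> omega

namespace CyclesIncreasing

variable (hρ : ρ.CyclesIncreasing)
include hρ

lemma apply_mem_arc (hne : a ≠ b) (hz : z = a ∨ sbtw a z b) (hzb : ρ.SameCycle z b) :
    ρ z = b ∨ sbtw a (ρ z) b := by
  have hzb' : z ≠ b := by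
    rintro rfl
    exact hz.elim hne.symm (sbtw_irrefl_right)
  have hmoved : ρ z ≠ z := fun h => hzb' (hzb.eq_of_left h)
  have := hρ z b hzb
  rw [Fin.sbtw_iff] at this hz ⊢
  omega

lemma mem_arc_of_sameCycle_mul_swap (hab : ρ.SameCycle a b) (hne : a ≠ b)
    (hy : (ρ * swap a b).SameCycle b y) : ρ.SameCycle b y ∧ (y = b ∨ sbtw a y b) := by
  refine hy.mem_of_mapsTo (s := {w | ρ.SameCycle b w ∧ (w = b ∨ sbtw a w b)}) ?_
    ⟨.rfl, Or.inl rfl⟩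
  rintro w ⟨hbw, rfl | hw⟩
  · rw [mul_swap_apply_right]
    exact ⟨hab.symm.apply_right, hρ.apply_mem_arc hne (Or.inl rfl) hab⟩
  · have hwa : w ≠ a := by rintro rfl; exact sbtw_irrefl_left hw
    have hwb : w ≠ b := by rintro rfl; exact sbtw_irrefl_right hw
    rw [mul_swap_apply_of_ne_of_ne ρ hwa hwb]
    exact ⟨hbw.apply_right, hρ.apply_mem_arc hne (Or.inr hw) hbw.symm⟩

lemma not_sbtw_of_sameCycle_mul_swap (hab : ρ.SameCycle a b) (hne : a ≠ b)
    (hy : (ρ * swap a b).SameCycle b y) : ¬sbtw b y (ρ a) := by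
  obtain ⟨hby, hy⟩ := hρ.mem_arc_of_sameCycle_mul_swap hab hne hy
  have h₁ := hρ a y (hab.trans hby)
  have h₂ := hρ.apply_mem_arc hne (Or.inl rfl) hab
  rw [Fin.sbtw_iff] at h₁ h₂ hy ⊢
  omega

lemma mul_swap (hab : ρ.SameCycle a b) (hne : a ≠ b) : (ρ * swap a b).CyclesIncreasing := by
  intro x y hxy
  rcases eq_or_ne x b with rfl | hxb
  · rw [mul_swap_apply_right]
    exact hρ.not_sbtw_of_sameCycle_mul_swap hab hne hxy
  rcases eq_or_ne x a with rfl | hxa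
  · rw [swap_comm] at hxy ⊢
    rw [mul_swap_apply_right]
    exact hρ.not_sbtw_of_sameCycle_mul_swap hab.symm hne.symm hxy
  rw [mul_swap_apply_of_ne_of_ne ρ hxa hxb]
  exact hρ x y (hxy.of_mul_swap_of_sameCycle hab)

lemma apply_eq_self_of_mul_swap (hρ' : (ρ * swap a b).CyclesIncreasing)
    (hab : ¬ρ.SameCycle a b) (hlt : a < b) (hbz : ρ.SameCycle b z) (hza : z ≤ a) : ρ b = b := by
  -- `ρ b = (ρ * swap a b) a` lies in the arc `(a, b)`, so `z` lies strictly between `b` and `ρ b`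
  by_contra hb
  have h₁ := hρ' a b (sameCycle_mul_swap_of_not_sameCycle hab)
  rw [mul_swap_apply_left] at h₁
  have h₂ := hρ b z hbz
  have hρb : ρ b ≠ a := fun h => hab (h ▸ SameCycle.rfl.apply_right : ρ.SameCycle b a).symm
  have hz : z ≠ a := by rintro rfl; exact hab hbz.symm
  rw [Fin.sbtw_iff] at h₁ h₂
  omega

end CyclesIncreasing

end Equiv.Perm

lemma cyclesIncreasing_of_precLe {n : ℕ} {σ : Perm (Fin n)} (h : precLe σ (finRotate n)) :
    σ.CyclesIncreasing :=
  precLe_induction (cyclesIncreasing_finRotate n)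
    (fun _ _ _ hτ hsc hne => hτ.mul_swap hsc hne) h

section Chain

variable {n k : ℕ} {τ : Fin k → Perm (Fin n)}

lemma gammaP_zero (τ : Fin k → Perm (Fin n)) : gammaP τ 0 = 1 := by
  simp [gammaP]

lemma gammaP_succ (τ : Fin k → Perm (Fin n)) (l : Fin k) : gammaP τ (l + 1) = gammaP τ l * τ l := by
  simp [gammaP, List.take_add_one, List.prod_append]

lemma gammaP_self (τ : Fin k → Perm (Fin n)) : gammaP τ k = (List.ofFn τ).prod := by
  rw [gammaP, List.take_of_length_le (by simp)]

lemma normPerm_gammaP_succ_le (hswap : ∀ l, (τ l).IsSwap) (l : Fin k) :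
    normPerm (gammaP τ (l + 1)) ≤ normPerm (gammaP τ l) + 1 := by
  obtain ⟨a, b, -, hab⟩ := hswap l
  rw [gammaP_succ, hab]
  exact normPerm_mul_swap_le _ a b

lemma normPerm_gammaP_le (hswap : ∀ l, (τ l).IsSwap) {m : ℕ} (hm : m ≤ k) :
    normPerm (gammaP τ m) ≤ m := by
  induction m with
  | zero => simp [gammaP_zero, normPerm_eq_zero_iff]
  | succ m ih =>
    have hstep : normPerm (gammaP τ (m + 1)) ≤ normPerm (gammaP τ m) + 1 :=
      normPerm_gammaP_succ_le hswap ⟨m, hm⟩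
    have := ih (by omega)
    omega

lemma normPerm_gammaP (hτ : τ ∈ SigmaSet n k) {m : ℕ} (hm : m ≤ k) :
    normPerm (gammaP τ m) = m := by
  suffices k ≤ normPerm (gammaP τ m) + (k - m) by
    have := normPerm_gammaP_le hτ.1 hm
    omega
  induction hm using Nat.decreasingInduction with
  | self => rw [gammaP_self, hτ.2.1]; omega
  | of_succ m hm ih =>
    have hstep : normPerm (gammaP τ (m + 1)) ≤ normPerm (gammaP τ m) + 1 :=
      normPerm_gammaP_succ_le hτ.1 ⟨m, hm⟩
    omega

lemma precLe_gammaP (hτ : τ ∈ SigmaSet n k) {m : ℕ} (hm : m ≤ k) :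
    precLe (gammaP τ m) (finRotate n) := by
  induction hm using Nat.decreasingInduction with
  | self => rw [gammaP_self]; exact hτ.2.2
  | of_succ m hm ih =>
    refine precLe_trans ?_ ih
    have hstep : gammaP τ (m + 1) = gammaP τ m * τ ⟨m, hm⟩ := gammaP_succ τ ⟨m, hm⟩
    unfold precLe
    rw [normPerm_gammaP hτ hm, normPerm_gammaP hτ hm.le, hstep, inv_mul_cancel_left,
      normPerm_eq_one_of_isSwap (hτ.1 _)]

lemma not_sameCycle_gammaP (hτ : τ ∈ SigmaSet n k) {l : Fin k} {a b : Fin n}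
    (hl : τ l = swap a b) : ¬(gammaP τ l).SameCycle a b := by
  intro h
  have h₀ := normPerm_gammaP hτ l.isLt.le
  have h₁ := normPerm_gammaP hτ l.isLt
  rw [gammaP_succ, hl] at h₁
  rcases eq_or_ne a b with rfl | hab
  · rw [swap_self, ← Perm.one_def, mul_one] at h₁
    omega
  · have := normPerm_mul_swap_of_sameCycle h hab
    omega

lemma exists_sameCycle_gammaP_of_apply_ne {i j : Fin k → Fin n}
    (hγ : (fun l => swap (i l) (j l)) ∈ SigmaSet n k) {m : ℕ} (hm : m ≤ k) {x : Fin n}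
    (hx : gammaP (fun l => swap (i l) (j l)) m x ≠ x) :
    ∃ l : Fin k, (l : ℕ) < m ∧ (gammaP (fun l => swap (i l) (j l)) m).SameCycle x (i l) := by
  induction m with
  | zero => simp [gammaP_zero] at hx
  | succ m ih =>
    set l : Fin k := ⟨m, hm⟩
    have hstep : gammaP (fun l => swap (i l) (j l)) (m + 1) =
        gammaP (fun l => swap (i l) (j l)) m * swap (i l) (j l) := gammaP_succ _ l
    have hmerge := not_sameCycle_gammaP hγ (l := l) rfl
    rw [hstep] at hx ⊢
    rcases eq_or_ne x (i l) with rfl | hxi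
    · exact ⟨l, Nat.lt_succ_self m, .rfl⟩
    rcases eq_or_ne x (j l) with rfl | hxj
    · exact ⟨l, Nat.lt_succ_self m, (sameCycle_mul_swap_of_not_sameCycle hmerge).symm⟩
    rw [mul_swap_apply_of_ne_of_ne _ hxi hxj] at hx
    obtain ⟨l', hl', hxl'⟩ := ih (by omega) hx
    exact ⟨l', by omega, hxl'.mul_swap_of_not_sameCycle hmerge⟩

end Chain

/-- For a non-decreasing path γ = ((i₁ j₁),…,(i_k j_k)) ∈ Σ*_n(k) and l ∈ {1,…,k}, γ_l is
obtained from γ_{l−1} by inserting j_l immediately after i_l in the cycle of i_l: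
γ_l(i_l) = j_l, γ_l(j_l) = γ_{l−1}(i_l), and γ_l agrees with γ_{l−1} elsewhere. -/
theorem stmt12 (n k : ℕ) (i j : Fin k → Fin n) (hij : ∀ l, i l < j l)
    (hmono : Monotone i)
    (hγ : (fun l => Equiv.swap (i l) (j l)) ∈ SigmaSet n k) (l : Fin k) :
    gammaP (fun m => Equiv.swap (i m) (j m)) ((l : ℕ) + 1) (i l) = j l ∧
    gammaP (fun m => Equiv.swap (i m) (j m)) ((l : ℕ) + 1) (j l) =
      gammaP (fun m => Equiv.swap (i m) (j m)) (l : ℕ) (i l) ∧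
    ∀ x, x ≠ i l → x ≠ j l →
      gammaP (fun m => Equiv.swap (i m) (j m)) ((l : ℕ) + 1) x =
        gammaP (fun m => Equiv.swap (i m) (j m)) (l : ℕ) x := by
  have hstep : gammaP (fun m => Equiv.swap (i m) (j m)) (l + 1) =
      gammaP (fun m => Equiv.swap (i m) (j m)) l * Equiv.swap (i l) (j l) := gammaP_succ _ l
  refine ⟨?_, by rw [hstep, mul_swap_apply_right],
    fun x hxi hxj => by rw [hstep, mul_swap_apply_of_ne_of_ne _ hxi hxj]⟩
  rw [hstep, mul_swap_apply_left]
  by_contra hj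
  obtain ⟨m, hml, hjm⟩ := exists_sameCycle_gammaP_of_apply_ne hγ l.isLt.le hj
  have hρ := cyclesIncreasing_of_precLe (precLe_gammaP hγ l.isLt.le)
  have hρ' := cyclesIncreasing_of_precLe (precLe_gammaP hγ l.isLt)
  rw [hstep] at hρ'
  exact hj (hρ.apply_eq_self_of_mul_swap hρ' (not_sameCycle_gammaP hγ rfl) (hij l) hjm
    (hmono (Fin.le_def.mpr hml.le)))
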